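/- arXiv:1403.6931 — 6 statements merged into one kernel-verified Lean document; each statement's English description precedes it below -/
import Mathlib

section
/- Let α be a real number with 1/√2 ≤ α ≤ 1, and let p, q be real numbers with α ≤ p ≤ 1 and 0 ≤ q ≤ √(1 − α²). Then p·q + √(1 − p²)·√(1 − q²) ≤ 2α√(1 − α²). -/
/-- For `1/√2 ≤ α ≤ 1`, `α ≤ p ≤ 1` and `0 ≤ q ≤ √(1-α²)`, we have
`p·q + √(1-p²)·√(1-q²) ≤ 2α√(1-α²)`. -/
theorem stmt_3 (α p q : ℝ) (hα1 : 1 / Real.sqrt 2 ≤ α) (hα2 : α ≤ 1)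
    (hp1 : α ≤ p) (hp2 : p ≤ 1) (hq1 : 0 ≤ q) (hq2 : q ≤ Real.sqrt (1 - α ^ 2)) :
    p * q + Real.sqrt (1 - p ^ 2) * Real.sqrt (1 - q ^ 2) ≤
      2 * α * Real.sqrt (1 - α ^ 2) := by
  have h2 : (0:ℝ) < Real.sqrt 2 := Real.sqrt_pos.2 (by norm_num)
  have hα0 : 0 < α := lt_of_lt_of_le (by positivity) hα1
  have hα2sq : (1:ℝ)/2 ≤ α ^ 2 := by
    have := mul_le_mul hα1 hα1 (by positivity) hα0.le
    calc (1:ℝ)/2 = 1 / Real.sqrt 2 * (1 / Real.sqrt 2) := by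
          rw [div_mul_div_comm, one_mul, Real.mul_self_sqrt (by norm_num)]
      _ ≤ α * α := this
      _ = α ^ 2 := (sq α).symm
  set β := Real.sqrt (1 - α ^ 2) with hβdef
  set s := Real.sqrt (1 - p ^ 2) with hsdef
  set t := Real.sqrt (1 - q ^ 2) with htdef
  have hβ0 : 0 ≤ β := Real.sqrt_nonneg _
  have hs0 : 0 ≤ s := Real.sqrt_nonneg _
  have ht0 : 0 ≤ t := Real.sqrt_nonneg _
  have hβsq : β ^ 2 = 1 - α ^ 2 := Real.sq_sqrt (by nlinarith)
  have hssq : s ^ 2 = 1 - p ^ 2 := Real.sq_sqrt (by nlinarith)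
  have hqβ : q ≤ β := hq2
  have htsq : t ^ 2 = 1 - q ^ 2 := Real.sq_sqrt (by nlinarith)
  have hβα : β ≤ α := by nlinarith
  have hsβ : s ≤ β := by nlinarith
  have hαt : α ≤ t := by nlinarith
  -- step 1: p*q + s*t ≤ p*β + s*α
  have step1 : p * q + s * t ≤ p * β + s * α := by
    have hta : 0 < t + α := by linarith
    have h1 : s * (β + q) ≤ p * (t + α) := by nlinarith
    have key : s * (t - α) * (t + α) ≤ p * (β - q) * (t + α) := by
      have h3 : (β - q) * (s * (β + q)) ≤ (β - q) * (p * (t + α)) :=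
        mul_le_mul_of_nonneg_left h1 (by linarith)
      calc s * (t - α) * (t + α) = (β - q) * (s * (β + q)) := by
            linear_combination s * htsq - s * hβsq
        _ ≤ (β - q) * (p * (t + α)) := h3
        _ = p * (β - q) * (t + α) := by ring
    have h4 : s * (t - α) ≤ p * (β - q) := le_of_mul_le_mul_right key hta
    calc p * q + s * t = s * (t - α) + (p * q + s * α) := by ring
      _ ≤ p * (β - q) + (p * q + s * α) := by linarith
      _ = p * β + s * α := by ring
  -- step 2: p*β + s*α ≤ 2*α*β
  have step2 : p * β + s * α ≤ 2 * α * β := by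
    rcases eq_or_lt_of_le (by positivity : (0:ℝ) ≤ β + s) with h | h
    · have hβ' : β = 0 := by linarith
      have hs' : s = 0 := by linarith
      rw [hβ', hs']; simp
    · have h1 : β * (β + s) ≤ α * (p + α) :=
        mul_le_mul hβα (by linarith) (by linarith) hα0.le
      have key : β * (p - α) * (β + s) ≤ α * (β - s) * (β + s) := by
        have h3 : (p - α) * (β * (β + s)) ≤ (p - α) * (α * (p + α)) :=
          mul_le_mul_of_nonneg_left h1 (by linarith)
        calc β * (p - α) * (β + s) = (p - α) * (β * (β + s)) := by ring
          _ ≤ (p - α) * (α * (p + α)) := h3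
          _ = α * (β - s) * (β + s) := by
            linear_combination α * hssq - α * hβsq
      have h4 : β * (p - α) ≤ α * (β - s) := le_of_mul_le_mul_right key h
      calc p * β + s * α = β * (p - α) + (α * β + s * α) := by ring
        _ ≤ α * (β - s) + (α * β + s * α) := by linarith
        _ = 2 * α * β := by ring
  linarith
end

section
/- Let r ≥ 2 be an integer, let α be a real number with 1/√2 ≤ α ≤ 1, and let g, h ∈ ℂ^r be vectors with ‖g‖ = ‖h‖ = 1. Suppose i ≠ j are indices such that |g_i| ≥ α and |h_j| ≥ α. Then |⟨g, h⟩| ≤ 2α√(1 − α²), where ⟨g,h⟩ = Σ_m conj(g_m) h_m is the standard Hermitian inner product. -/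
/-!
Write `a = |g_i|`, `b = |h_i|`. Splitting off the `i`-th coordinate and applying Cauchy–Schwarz to
the rest gives `|⟨g, h⟩| ≤ ab + √(1 - a²)√(1 - b²)`, the inner product of the unit vectors
`(a, √(1 - a²))` and `(b, √(1 - b²))` of the quarter circle. Since `|h_j| ≥ α` with `j ≠ i`, we
have `b ≤ β := √(1 - α²) ≤ α ≤ a`, so these two points are at least as far apart on the circle as
`(α, β)` and `(β, α)`, whose inner product is `2αβ`.
-/

open Finset

/-- On the quarter circle, the inner product with `(a, u)` decreases as the second point moves
counterclockwise from `(c, w)` to `(b, v)`, provided `(c, w)` is already counterclockwise from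
`(a, u)`. -/
theorem mul_add_mul_le_mul_add_mul_of_le {a u b v c w : ℝ} (ha : 0 ≤ a) (hu : 0 ≤ u)
    (hb : 0 ≤ b) (hv : 0 ≤ v) (hw : 0 ≤ w) (hbv : b ^ 2 + v ^ 2 = 1) (hcw : c ^ 2 + w ^ 2 = 1)
    (hbc : b ≤ c) (hcounter : u * c ≤ a * w) :
    a * b + u * v ≤ a * c + u * w := by
  have hwv : w ≤ v := by nlinarith
  have hub : u * b ≤ a * v := calc
    u * b ≤ u * c := mul_le_mul_of_nonneg_left hbc hu
    _ ≤ a * w := hcounter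
    _ ≤ a * v := mul_le_mul_of_nonneg_left hwv ha
  have hkey : 0 ≤ (a * (c - b) - u * (v - w)) * (v + w) := by
    have hsq : (v - w) * (v + w) = (c - b) * (c + b) := by linear_combination hbv - hcw
    rw [show (a * (c - b) - u * (v - w)) * (v + w) =
        (c - b) * ((a * v - u * b) + (a * w - u * c)) by linear_combination (-u) * hsq]
    exact mul_nonneg (sub_nonneg.2 hbc) (by linarith)
  rcases (add_nonneg hv hw).eq_or_lt with hzero | hpos
  · obtain rfl : v = 0 := by linarith
    obtain rfl : w = 0 := by linarith
    nlinarith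
  · nlinarith [nonneg_of_mul_nonneg_left hkey hpos]

theorem sqrt_one_sub_sq_le_self {α : ℝ} (hα : 1 / √2 ≤ α) : √(1 - α ^ 2) ≤ α := by
  have hsq : 1 / 2 ≤ α ^ 2 := by
    have := pow_le_pow_left₀ (by positivity) hα 2
    rwa [div_pow, Real.sq_sqrt zero_le_two, one_pow] at this
  rw [Real.sqrt_le_iff]
  exact ⟨(by positivity : (0 : ℝ) ≤ 1 / √2).trans hα, by linarith⟩

theorem mul_add_sqrt_mul_sqrt_le {α a b : ℝ} (hα : √(1 - α ^ 2) ≤ α) (ha : α ≤ a)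
    (ha₁ : a ≤ 1) (hb : 0 ≤ b) (hb' : b ≤ √(1 - α ^ 2)) :
    a * b + √(1 - a ^ 2) * √(1 - b ^ 2) ≤ 2 * α * √(1 - α ^ 2) := by
  set β := √(1 - α ^ 2)
  have hβ : 0 ≤ β := Real.sqrt_nonneg _
  have hα₀ : 0 ≤ α := hβ.trans hα
  have hαβ : α ^ 2 + β ^ 2 = 1 := by rw [Real.sq_sqrt (by nlinarith)]; ring
  have hu : √(1 - a ^ 2) ^ 2 = 1 - a ^ 2 := Real.sq_sqrt (by nlinarith)
  have hv : √(1 - b ^ 2) ^ 2 = 1 - b ^ 2 := Real.sq_sqrt (by nlinarith)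
  have hu₀ := Real.sqrt_nonneg (1 - a ^ 2)
  have huβ : √(1 - a ^ 2) ≤ β := Real.sqrt_le_sqrt (by nlinarith)
  calc a * b + √(1 - a ^ 2) * √(1 - b ^ 2)
      ≤ a * β + √(1 - a ^ 2) * α :=
        mul_add_mul_le_mul_add_mul_of_le (hα₀.trans ha) hu₀ hb (Real.sqrt_nonneg _) hα₀
          (by linarith) (by linarith) hb' (by nlinarith)
    _ = α * √(1 - a ^ 2) + β * a := by ring
    _ ≤ α * β + β * α :=
        mul_add_mul_le_mul_add_mul_of_le hα₀ hβ hu₀ (hα₀.trans ha) hα₀ (by linarith)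
          (by linarith) huβ (by nlinarith [mul_le_mul hα hα hβ hα₀])
    _ = 2 * α * β := by ring

section EuclideanSpace

variable {𝕜 ι : Type*} [RCLike 𝕜] [Fintype ι] [DecidableEq ι]

theorem EuclideanSpace.norm_sq_sub_norm_apply_sq (x : EuclideanSpace 𝕜 ι) (i : ι) :
    ‖x‖ ^ 2 - ‖x i‖ ^ 2 = ∑ m ∈ univ.erase i, ‖x m‖ ^ 2 := by
  rw [EuclideanSpace.norm_sq_eq, ← add_sum_erase _ _ (mem_univ i), add_sub_cancel_left]

theorem EuclideanSpace.norm_apply_sq_add_norm_apply_sq_le (x : EuclideanSpace 𝕜 ι) {i j : ι}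
    (hij : i ≠ j) : ‖x i‖ ^ 2 + ‖x j‖ ^ 2 ≤ ‖x‖ ^ 2 := by
  rw [EuclideanSpace.norm_sq_eq, ← sum_pair (f := fun m ↦ ‖x m‖ ^ 2) hij]
  exact sum_le_sum_of_subset_of_nonneg (subset_univ _) fun _ _ _ ↦ sq_nonneg _

theorem EuclideanSpace.norm_inner_le_of_apply (x y : EuclideanSpace 𝕜 ι) (i : ι) :
    ‖inner 𝕜 x y‖ ≤ ‖x i‖ * ‖y i‖ + √(‖x‖ ^ 2 - ‖x i‖ ^ 2) * √(‖y‖ ^ 2 - ‖y i‖ ^ 2) := by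
  have hinner : inner 𝕜 x y = (starRingEnd 𝕜) (x i) * y i +
      ∑ m ∈ univ.erase i, (starRingEnd 𝕜) (x m) * y m := by
    rw [add_sum_erase _ (fun m ↦ (starRingEnd 𝕜) (x m) * y m) (mem_univ i)]
    simp [PiLp.inner_apply, mul_comm]
  rw [hinner, norm_sq_sub_norm_apply_sq, norm_sq_sub_norm_apply_sq]
  refine (norm_add_le _ _).trans (add_le_add (by simp) ?_)
  calc ‖∑ m ∈ univ.erase i, (starRingEnd 𝕜) (x m) * y m‖
      ≤ ∑ m ∈ univ.erase i, ‖x m‖ * ‖y m‖ := (norm_sum_le _ _).trans_eq (by simp)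
    _ ≤ _ := Real.sum_mul_le_sqrt_mul_sqrt _ _ _

end EuclideanSpace

theorem stmt_4_general (r : ℕ) (α : ℝ) (hα1 : 1 / Real.sqrt 2 ≤ α)
    (g h : EuclideanSpace ℂ (Fin r)) (hg : ‖g‖ = 1) (hh : ‖h‖ = 1)
    (i j : Fin r) (hij : i ≠ j)
    (hgi : α ≤ ‖g i‖) (hhj : α ≤ ‖h j‖) :
    ‖∑ m : Fin r, (starRingEnd ℂ) (g m) * h m‖ ≤
      2 * α * Real.sqrt (1 - α ^ 2) := by
  have hinner : ∑ m : Fin r, (starRingEnd ℂ) (g m) * h m = inner ℂ g h := by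
    simp [PiLp.inner_apply, mul_comm]
  have hα := sqrt_one_sub_sq_le_self hα1
  have hhi : ‖h i‖ ≤ √(1 - α ^ 2) := by
    have hpair := h.norm_apply_sq_add_norm_apply_sq_le hij
    rw [hh] at hpair
    have hαj := pow_le_pow_left₀ ((Real.sqrt_nonneg _).trans hα) hhj 2
    exact Real.le_sqrt_of_sq_le (by linarith)
  calc ‖∑ m : Fin r, (starRingEnd ℂ) (g m) * h m‖
      ≤ ‖g i‖ * ‖h i‖ + √(1 - ‖g i‖ ^ 2) * √(1 - ‖h i‖ ^ 2) := by
        simpa [hinner, hg, hh] using g.norm_inner_le_of_apply h i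
    _ ≤ 2 * α * √(1 - α ^ 2) :=
        mul_add_sqrt_mul_sqrt_le hα hgi (hg ▸ PiLp.norm_apply_le g i) (norm_nonneg _) hhi

/-- Lemma 2 of the paper: if unit vectors `g, h ∈ ℂ^r` lie in the
user-selection double cones around distinct standard basis directions `i ≠ j`
(i.e. `|g_i| ≥ α` and `|h_j| ≥ α`) with `1/√2 ≤ α ≤ 1`, then
`|⟪g,h⟫| ≤ 2α√(1-α²)`. -/
theorem stmt_4 (r : ℕ) (hr : 2 ≤ r) (α : ℝ) (hα1 : 1 / Real.sqrt 2 ≤ α) (hα2 : α ≤ 1)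
    (g h : EuclideanSpace ℂ (Fin r)) (hg : ‖g‖ = 1) (hh : ‖h‖ = 1)
    (i j : Fin r) (hij : i ≠ j)
    (hgi : α ≤ ‖g i‖) (hhj : α ≤ ‖h j‖) :
    ‖∑ m : Fin r, (starRingEnd ℂ) (g m) * h m‖ ≤
      2 * α * Real.sqrt (1 - α ^ 2) :=
  stmt_4_general r α hα1 g h hg hh i j hij hgi hhj
end

section
/- Let n ≥ 2 be an integer and let α be a real number with 1/√2 ≤ α ≤ 1 and (n−1)·2α√(1−α²) < 1. Let g_1, …, g_n ∈ ℂ^n be nonzero vectors such that for each i, |(g_i)_i| ≥ α·‖g_i‖, where (g_i)_i denotes the i-th coordinate of g_i. Let A be the Gram matrix with entries A_{ij} = ⟨g_i, g_j⟩. Then A is invertible, each (A⁻¹)_{ii} is a positive real number, and 1/(A⁻¹)_{ii} ≥ ‖g_i‖² · (1 − (n−1)·2α√(1−α²)) for every i. -/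
/-!
Put `δ = 2α√(1-α²) = sin (2 arccos α)`. A vector in the cone around `e_i` and one in the cone
around `e_j`, `i ≠ j`, make an angle of at least `π/2 - 2 arccos α`, so
`|⟪g_i, g_j⟫| ≤ δ ‖g_i‖ ‖g_j‖`. Bounding the off-diagonal terms this way and using
`(∑ u_j)² ≤ n ∑ u_j²` gives, for every `x`,
`xᴴ A x = ‖∑ x_j g_j‖² ≥ (1 - (n-1)δ) ∑ |x_j|² ‖g_j‖²`.
So `A` is positive definite, and at `x = A⁻¹ e_i`, where `xᴴ A x = (A⁻¹)_ii = x_i`, the bound reads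
`(A⁻¹)_ii ≥ (1 - (n-1)δ) ‖g_i‖² (A⁻¹)_ii²`.
-/

open scoped InnerProductSpace ComplexConjugate
open RCLike Matrix ComplexOrder

variable {𝕜 E : Type*} [RCLike 𝕜] [NormedAddCommGroup E] [InnerProductSpace 𝕜 E]

theorem inner_eq_conj_mul_add_inner_sub_smul {e : E} (he : ‖e‖ = 1) (x y : E) :
    ⟪x, y⟫_𝕜 = conj ⟪e, x⟫_𝕜 * ⟪e, y⟫_𝕜 + ⟪x - ⟪e, x⟫_𝕜 • e, y - ⟪e, y⟫_𝕜 • e⟫_𝕜 := by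
  simp only [inner_sub_left, inner_sub_right, inner_smul_left, inner_smul_right,
    inner_self_eq_norm_sq_to_K, he, inner_conj_symm, ofReal_one, one_pow]
  ring

theorem norm_sub_inner_smul_sq {e : E} (he : ‖e‖ = 1) (x : E) :
    ‖x - ⟪e, x⟫_𝕜 • e‖ ^ 2 = ‖x‖ ^ 2 - ‖⟪e, x⟫_𝕜‖ ^ 2 := by
  have h := congrArg re (inner_eq_conj_mul_add_inner_sub_smul (𝕜 := 𝕜) he x x)
  rw [map_add, RCLike.conj_mul, ← ofReal_pow, ofReal_re, inner_self_eq_norm_sq,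
    inner_self_eq_norm_sq] at h
  linarith

/- `(a, s)` and `(c, t)` have lengths `X`, `Y` and make angles at most `arccos α` and at least
`arccos β` with the first axis; by Lagrange's identity it suffices that
`a * t - c * s ≥ (α ^ 2 - β ^ 2) * X * Y`. -/
theorem mul_add_mul_le_two_mul_mul {α β X Y a s c t : ℝ} (hβ : 0 ≤ β) (hβα : β ≤ α)
    (hαβ : α ^ 2 + β ^ 2 = 1) (hX : 0 ≤ X) (hY : 0 ≤ Y) (hs : 0 ≤ s) (hc : 0 ≤ c) (ht : 0 ≤ t)
    (hasX : a ^ 2 + s ^ 2 = X ^ 2) (hctY : c ^ 2 + t ^ 2 = Y ^ 2)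
    (ha : α * X ≤ a) (hcβ : c ≤ β * Y) :
    a * c + s * t ≤ 2 * α * β * (X * Y) := by
  have hα : 0 ≤ α := hβ.trans hβα
  have ha0 : 0 ≤ a := (mul_nonneg hα hX).trans ha
  have hsX : s ≤ β * X := by
    refine (pow_le_pow_iff_left₀ hs (by positivity) two_ne_zero).mp ?_
    nlinarith [mul_le_mul (le_refl α) ha (by positivity) hα]
  have htY : α * Y ≤ t := by
    refine (pow_le_pow_iff_left₀ (by positivity) ht two_ne_zero).mp ?_
    nlinarith [mul_le_mul hcβ hcβ hc (by positivity)]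
  have hLagrange : (a * c + s * t) ^ 2 + (a * t - c * s) ^ 2 = X ^ 2 * Y ^ 2 := by
    rw [← hasX, ← hctY]; ring
  have hcross : (α ^ 2 - β ^ 2) * (X * Y) ≤ a * t - c * s := by
    nlinarith [mul_le_mul ha htY (by positivity) ha0, mul_le_mul hcβ hsX hs (by positivity)]
  have hcross0 : 0 ≤ (α ^ 2 - β ^ 2) * (X * Y) :=
    mul_nonneg (by nlinarith) (mul_nonneg hX hY)
  have hdouble : (2 * α * β * (X * Y)) ^ 2 = X ^ 2 * Y ^ 2 - ((α ^ 2 - β ^ 2) * (X * Y)) ^ 2 := by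
    linear_combination X ^ 2 * Y ^ 2 * (α ^ 2 + β ^ 2 + 1) * hαβ
  refine (pow_le_pow_iff_left₀ (by positivity) (by positivity) two_ne_zero).mp ?_
  nlinarith [mul_self_le_mul_self hcross0 hcross]

theorem Orthonormal.norm_inner_le_of_mem_cones {ι : Type*} {b : ι → E} (hb : Orthonormal 𝕜 b)
    {i j : ι} (hij : i ≠ j) {α β : ℝ} (hβ : 0 ≤ β) (hβα : β ≤ α) (hαβ : α ^ 2 + β ^ 2 = 1)
    {x y : E} (hx : α * ‖x‖ ≤ ‖⟪b i, x⟫_𝕜‖) (hy : α * ‖y‖ ≤ ‖⟪b j, y⟫_𝕜‖) :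
    ‖⟪x, y⟫_𝕜‖ ≤ 2 * α * β * (‖x‖ * ‖y‖) := by
  have hα : 0 ≤ α := hβ.trans hβα
  set e := b i
  set e' := b j
  have he : ‖e‖ = 1 := hb.1 i
  have he' : ‖e'‖ = 1 := hb.1 j
  set x' := x - ⟪e, x⟫_𝕜 • e
  set y' := y - ⟪e, y⟫_𝕜 • e
  have hsplit : ‖⟪x, y⟫_𝕜‖ ≤ ‖⟪e, x⟫_𝕜‖ * ‖⟪e, y⟫_𝕜‖ + ‖x'‖ * ‖y'‖ := by
    rw [inner_eq_conj_mul_add_inner_sub_smul he]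
    refine (norm_add_le _ _).trans (add_le_add ?_ (norm_inner_le_norm _ _))
    rw [norm_mul, RCLike.norm_conj]
  have hy' : ‖⟪e', y⟫_𝕜‖ ≤ ‖y'‖ := by
    have : ⟪e', y'⟫_𝕜 = ⟪e', y⟫_𝕜 := by
      rw [inner_sub_right, inner_smul_right, hb.2 hij.symm, mul_zero, sub_zero]
    simpa [this, he'] using norm_inner_le_norm (𝕜 := 𝕜) e' y'
  have hPx := norm_sub_inner_smul_sq (𝕜 := 𝕜) he x
  have hPy := norm_sub_inner_smul_sq (𝕜 := 𝕜) he y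
  have hyβ : ‖⟪e, y⟫_𝕜‖ ≤ β * ‖y‖ := by
    refine (pow_le_pow_iff_left₀ (norm_nonneg _) (mul_nonneg hβ (norm_nonneg y)) two_ne_zero).mp ?_
    nlinarith [mul_le_mul hy hy (mul_nonneg hα (norm_nonneg y)) (norm_nonneg _),
      mul_le_mul hy' hy' (norm_nonneg _) (norm_nonneg _)]
  refine hsplit.trans (mul_add_mul_le_two_mul_mul hβ hβα hαβ (norm_nonneg x) (norm_nonneg y)
    (norm_nonneg _) (norm_nonneg _) (norm_nonneg _) ?_ ?_ hx hyβ) <;> linarith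

theorem mul_sum_sq_le_norm_sum_smul_sq {ι : Type*} [Fintype ι] {v : ι → E} {δ : ℝ}
    (hδ : 0 ≤ δ) (hv : ∀ i j, i ≠ j → ‖⟪v i, v j⟫_𝕜‖ ≤ δ * (‖v i‖ * ‖v j‖)) (x : ι → 𝕜) :
    (1 - (Fintype.card ι - 1) * δ) * ∑ i, (‖x i‖ * ‖v i‖) ^ 2 ≤ ‖∑ i, x i • v i‖ ^ 2 := by
  classical
  set u := fun i ↦ ‖x i‖ * ‖v i‖
  set t := fun j k ↦ conj (x j) * x k * ⟪v j, v k⟫_𝕜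
  have hexpand : ‖∑ i, x i • v i‖ ^ 2 = ∑ j, re (∑ k, t j k) := by
    rw [← inner_self_eq_norm_sq (𝕜 := 𝕜), sum_inner, map_sum]
    refine Finset.sum_congr rfl fun j _ ↦ ?_
    simp only [inner_smul_left, inner_sum, inner_smul_right, t]
    exact congrArg re (Finset.sum_congr rfl fun k _ ↦ by ring)
  have hdiag : ∀ j, re (t j j) = u j ^ 2 := by
    intro j
    simp only [t, u, RCLike.conj_mul, inner_self_eq_norm_sq_to_K, ← ofReal_pow, ← ofReal_mul,
      ofReal_re, mul_pow]
  have hoff : ∀ j k, j ≠ k → -(δ * (u j * u k)) ≤ re (t j k) := by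
    intro j k hjk
    refine le_trans ?_ (abs_le.mp (abs_re_le_norm (t j k))).1
    rw [neg_le_neg_iff]
    simp only [t, u, norm_mul, RCLike.norm_conj]
    nlinarith [hv j k hjk, mul_nonneg (norm_nonneg (x j)) (norm_nonneg (x k))]
  have hrow : ∀ j, (1 + δ) * u j ^ 2 - δ * u j * ∑ k, u k ≤ re (∑ k, t j k) := by
    intro j
    have hoffsum := Finset.sum_le_sum fun k (hk : k ∈ Finset.univ.erase j) ↦
      hoff j k (Finset.ne_of_mem_erase hk).symm
    rw [Finset.sum_neg_distrib, ← Finset.mul_sum, ← Finset.mul_sum] at hoffsum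
    rw [map_sum, ← Finset.add_sum_erase _ (fun k ↦ re (t j k)) (Finset.mem_univ j), hdiag,
      ← Finset.add_sum_erase _ u (Finset.mem_univ j)]
    nlinarith
  have hCS := sq_sum_le_card_mul_sum_sq (s := Finset.univ) (f := u)
  rw [Finset.card_univ] at hCS
  have hrows : ∑ j, ((1 + δ) * u j ^ 2 - δ * u j * ∑ k, u k) =
      (1 + δ) * ∑ j, u j ^ 2 - δ * (∑ j, u j) ^ 2 := by
    simp only [Finset.sum_sub_distrib, ← Finset.mul_sum, ← Finset.sum_mul]; ring
  change (1 - _ * δ) * ∑ i, u i ^ 2 ≤ _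
  rw [hexpand]
  refine le_trans ?_ (Finset.sum_le_sum fun j _ ↦ hrow j)
  rw [hrows]
  nlinarith [mul_le_mul_of_nonneg_left hCS hδ]

theorem linearIndependent_of_norm_inner_le {ι : Type*} [Fintype ι] {v : ι → E} {δ : ℝ}
    (hδ : 0 ≤ δ) (hv : ∀ i j, i ≠ j → ‖⟪v i, v j⟫_𝕜‖ ≤ δ * (‖v i‖ * ‖v j‖))
    (hv0 : ∀ i, v i ≠ 0) (hsmall : (Fintype.card ι - 1) * δ < 1) :
    LinearIndependent 𝕜 v := by
  rw [Fintype.linearIndependent_iff]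
  intro x hx i
  have h := mul_sum_sq_le_norm_sum_smul_sq hδ hv x
  rw [hx, norm_zero, zero_pow two_ne_zero] at h
  have hsum : ∑ i, (‖x i‖ * ‖v i‖) ^ 2 = 0 :=
    le_antisymm (nonpos_of_mul_nonpos_right h (by linarith))
      (Finset.sum_nonneg fun _ _ ↦ sq_nonneg _)
  have hi := (Finset.sum_eq_zero_iff_of_nonneg fun _ _ ↦ sq_nonneg _).mp hsum i
    (Finset.mem_univ i)
  simpa [hv0 i] using hi

theorem Matrix.posDef_gram_of_norm_inner_le {ι : Type*} [Fintype ι] {v : ι → E} {δ : ℝ}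
    (hδ : 0 ≤ δ) (hv : ∀ i j, i ≠ j → ‖⟪v i, v j⟫_𝕜‖ ≤ δ * (‖v i‖ * ‖v j‖))
    (hv0 : ∀ i, v i ≠ 0) (hsmall : (Fintype.card ι - 1) * δ < 1) :
    (gram 𝕜 v).PosDef :=
  posDef_gram_of_linearIndependent (linearIndependent_of_norm_inner_le hδ hv hv0 hsmall)

theorem Matrix.mul_norm_inv_apply_sq_le_re {ι : Type*} [Fintype ι] [DecidableEq ι]
    {M : Matrix ι ι 𝕜} (hM : IsUnit M) {κ : ℝ} (i : ι)
    (h : ∀ x : ι → 𝕜, κ * ‖x i‖ ^ 2 ≤ re (star x ⬝ᵥ M *ᵥ x)) :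
    κ * ‖M⁻¹ i i‖ ^ 2 ≤ re (M⁻¹ i i) := by
  set y := M⁻¹ *ᵥ Pi.single i 1
  have hMy : M *ᵥ y = Pi.single i 1 := by
    rw [mulVec_mulVec, mul_nonsing_inv _ ((isUnit_iff_isUnit_det M).mp hM), one_mulVec]
  have hyi : y i = M⁻¹ i i := by simp [y, mulVec_single]
  have := h y
  rwa [hMy, dotProduct_single, mul_one, Pi.star_apply, hyi, RCLike.star_def, conj_re] at this

theorem Matrix.norm_sq_mul_le_one_div_re_inv_gram_apply {ι : Type*} [Fintype ι] [DecidableEq ι]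
    {v : ι → E} {δ : ℝ} (hδ : 0 ≤ δ)
    (hv : ∀ i j, i ≠ j → ‖⟪v i, v j⟫_𝕜‖ ≤ δ * (‖v i‖ * ‖v j‖))
    (hv0 : ∀ i, v i ≠ 0) (hsmall : (Fintype.card ι - 1) * δ < 1) (i : ι) :
    ‖v i‖ ^ 2 * (1 - (Fintype.card ι - 1) * δ) ≤ 1 / re ((gram 𝕜 v)⁻¹ i i) := by
  set r := (Fintype.card ι - 1 : ℝ) * δ
  have hpos := posDef_gram_of_norm_inner_le hδ hv hv0 hsmall
  have hre : 0 < re ((gram 𝕜 v)⁻¹ i i) := (RCLike.pos_iff.mp hpos.inv.diag_pos).1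
  have hgain := mul_norm_inv_apply_sq_le_re hpos.isUnit (κ := ‖v i‖ ^ 2 * (1 - r)) i fun x ↦ by
    rw [star_dotProduct_gram_mulVec, inner_self_eq_norm_sq]
    calc ‖v i‖ ^ 2 * (1 - r) * ‖x i‖ ^ 2 = (1 - r) * (‖x i‖ * ‖v i‖) ^ 2 := by ring
      _ ≤ (1 - r) * ∑ j, (‖x j‖ * ‖v j‖) ^ 2 := by
        gcongr
        exact Finset.single_le_sum (f := fun j ↦ (‖x j‖ * ‖v j‖) ^ 2) (fun j _ ↦ sq_nonneg _)
          (Finset.mem_univ i)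
      _ ≤ ‖∑ j, x j • v j‖ ^ 2 := mul_sum_sq_le_norm_sum_smul_sq hδ hv x
  have hre_le : re ((gram 𝕜 v)⁻¹ i i) ^ 2 ≤ ‖(gram 𝕜 v)⁻¹ i i‖ ^ 2 :=
    pow_le_pow_left₀ hre.le (re_le_norm _) 2
  refine (le_div_iff₀ hre).mpr (le_of_mul_le_mul_right ?_ hre)
  nlinarith [mul_le_mul_of_nonneg_left hre_le (by positivity : 0 ≤ ‖v i‖ ^ 2 * (1 - r))]

theorem stmt_8_general (n : ℕ) (α : ℝ) (hα1 : 1 / Real.sqrt 2 ≤ α) (hα2 : α ≤ 1)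
    (hsmall : (n - 1 : ℝ) * (2 * α * Real.sqrt (1 - α ^ 2)) < 1)
    (g : Fin n → EuclideanSpace ℂ (Fin n)) (hg : ∀ i, g i ≠ 0)
    (hcone : ∀ i, α * ‖g i‖ ≤ ‖g i i‖)
    (A : Matrix (Fin n) (Fin n) ℂ)
    (hAdef : ∀ i j, A i j = (inner ℂ (g i) (g j) : ℂ)) :
    IsUnit A ∧ ∀ i, (A⁻¹ i i).im = 0 ∧ 0 < (A⁻¹ i i).re ∧
      ‖g i‖ ^ 2 * (1 - (n - 1 : ℝ) * (2 * α * Real.sqrt (1 - α ^ 2))) ≤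
        1 / (A⁻¹ i i).re := by
  obtain rfl : A = gram ℂ g := Matrix.ext hAdef
  set β := Real.sqrt (1 - α ^ 2)
  have hα0 : 0 < α := lt_of_lt_of_le (by positivity) hα1
  have hhalf : 1 / 2 ≤ α ^ 2 := by
    simpa [div_pow, Real.sq_sqrt zero_le_two] using pow_le_pow_left₀ (by positivity) hα1 2
  have hαβ : α ^ 2 + β ^ 2 = 1 := by rw [Real.sq_sqrt (by nlinarith)]; ring
  have hβα : β ≤ α := Real.sqrt_le_iff.mpr ⟨hα0.le, by linarith⟩
  have hcross (i j : Fin n) (hij : i ≠ j) : ‖⟪g i, g j⟫_ℂ‖ ≤ 2 * α * β * (‖g i‖ * ‖g j‖) :=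
    EuclideanSpace.orthonormal_single.norm_inner_le_of_mem_cones hij (Real.sqrt_nonneg _) hβα
      hαβ (by simpa [EuclideanSpace.inner_single_left] using hcone i)
      (by simpa [EuclideanSpace.inner_single_left] using hcone j)
  have hδ : 0 ≤ 2 * α * β := by positivity
  have hsmall' : (Fintype.card (Fin n) - 1 : ℝ) * (2 * α * β) < 1 := by rwa [Fintype.card_fin]
  have hpos := posDef_gram_of_norm_inner_le hδ hcross hg hsmall'
  refine ⟨hpos.isUnit, fun i ↦ ⟨?_, ?_, ?_⟩⟩
  · exact (Complex.pos_iff.mp hpos.inv.diag_pos).2.symm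
  · exact (Complex.pos_iff.mp hpos.inv.diag_pos).1
  · simpa using norm_sq_mul_le_one_div_re_inv_gram_apply hδ hcross hg hsmall' i

/-- effective channel gain lower bound, eq. (58) of the paper: if each
nonzero `g i ∈ ℂ^n` lies in the double cone around the `i`-th standard basis direction
(`|(g i)_i| ≥ α‖g i‖`), with `1/√2 ≤ α ≤ 1` and `(n-1)·2α√(1-α²) < 1`, then the Gram
matrix `A = (⟪g i, g j⟫)` is invertible, each `(A⁻¹)_{ii}` is a positive real, and
`1/(A⁻¹)_{ii} ≥ ‖g i‖²(1 - (n-1)·2α√(1-α²))`. -/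
theorem stmt_8 (n : ℕ) (hn : 2 ≤ n) (α : ℝ) (hα1 : 1 / Real.sqrt 2 ≤ α) (hα2 : α ≤ 1)
    (hsmall : (n - 1 : ℝ) * (2 * α * Real.sqrt (1 - α ^ 2)) < 1)
    (g : Fin n → EuclideanSpace ℂ (Fin n)) (hg : ∀ i, g i ≠ 0)
    (hcone : ∀ i, α * ‖g i‖ ≤ ‖g i i‖)
    (A : Matrix (Fin n) (Fin n) ℂ)
    (hAdef : ∀ i j, A i j = (inner ℂ (g i) (g j) : ℂ)) :
    IsUnit A ∧ ∀ i, (A⁻¹ i i).im = 0 ∧ 0 < (A⁻¹ i i).re ∧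
      ‖g i‖ ^ 2 * (1 - (n - 1 : ℝ) * (2 * α * Real.sqrt (1 - α ^ 2))) ≤
        1 / (A⁻¹ i i).re :=
  stmt_8_general n α hα1 hα2 hsmall g hg hcone A hAdef
end

section
/- Let L ≥ 1 be an integer, let λ_1, …, λ_L be positive reals with λ_1 > λ_i for all i ≥ 2, let ζ > 0, let ξ_1 > 0, and let ξ_2, …, ξ_L be nonzero reals. Fix z ∈ ℝ and set b_K = λ_1·(log K + log(ζ/ξ_1)). Then lim_{K→∞} K·ζ·Σ_{i=1}^L e^{−(λ_1 z + b_K)/λ_i} / ξ_i = e^{−z}. -/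
/-!
Write `p = λ₁/λᵢ`. Then `e^{-(λ₁ z + b_K)/λᵢ} = K^{-p} e^{-p(z + log(ζ/ξ₁))}`, so the `i`-th summand
of `K ζ ∑ᵢ …` is a constant times `K^{1-p}`. For `i = 1` we have `p = 1` and the constant is
exactly `e^{-z}`; for every other `i`, `p > 1` and the summand tends to `0`.
-/

open Filter Real Topology

section

variable {a z w : ℝ}

lemma exp_neg_div_eq_rpow_mul_exp {x : ℝ} (hx : 0 < x) (μ : ℝ) :
    exp (-(a * z + a * (log x + w)) / μ) = x ^ (-(a / μ)) * exp (-(a * (z + w)) / μ) := by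
  rw [rpow_def_of_pos hx, ← exp_add]
  ring_nf

lemma tendsto_mul_exp_neg_div_self {ζ ξ : ℝ} (ha : a ≠ 0) (hc : 0 < ζ / ξ) :
    Tendsto (fun x : ℝ => x * ζ * (exp (-(a * z + a * (log x + log (ζ / ξ))) / a) / ξ))
      atTop (𝓝 (exp (-z))) := by
  refine tendsto_const_nhds.congr' ?_
  filter_upwards [eventually_gt_atTop 0] with x hx
  have hζ : ζ ≠ 0 := by rintro rfl; simp at hc
  have hξ : ξ ≠ 0 := by rintro rfl; simp at hc
  rw [exp_neg_div_eq_rpow_mul_exp hx, div_self ha, rpow_neg_one, neg_div,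
    mul_div_cancel_left₀ _ ha, neg_add, exp_add, exp_neg (log _), exp_log hc]
  field_simp

lemma tendsto_mul_exp_neg_div_of_lt {μ : ℝ} (hμ : 0 < μ) (hμa : μ < a) (c ν : ℝ) :
    Tendsto (fun x : ℝ => x * c * (exp (-(a * z + a * (log x + w)) / μ) / ν))
      atTop (𝓝 0) := by
  set C := c * exp (-(a * (z + w)) / μ) / ν
  have hdecay : Tendsto (fun x : ℝ => x ^ (-(a / μ - 1)) * C) atTop (𝓝 0) := by
    have hp : 0 < a / μ - 1 := by rw [sub_pos, one_lt_div hμ]; exact hμa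
    simpa only [zero_mul] using (tendsto_rpow_neg_atTop hp).mul_const C
  refine hdecay.congr' ?_
  filter_upwards [eventually_gt_atTop 0] with x hx
  rw [exp_neg_div_eq_rpow_mul_exp hx, neg_sub, rpow_sub hx, rpow_one, rpow_neg hx.le]
  ring

end

theorem stmt_13_general (L : ℕ) (hL : 0 < L) (lam : Fin L → ℝ) (hpos : ∀ i, 0 < lam i)
    (hmax : ∀ i : Fin L, i ≠ ⟨0, hL⟩ → lam i < lam ⟨0, hL⟩)
    (ζ : ℝ) (hζ : 0 < ζ) (ξ : Fin L → ℝ) (hξ1 : 0 < ξ ⟨0, hL⟩)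
    (z : ℝ) :
    Tendsto (fun K : ℕ => (K : ℝ) * ζ *
        ∑ i, Real.exp (-(lam ⟨0, hL⟩ * z +
            lam ⟨0, hL⟩ * (Real.log K + Real.log (ζ / ξ ⟨0, hL⟩))) / lam i) / ξ i)
      atTop (nhds (Real.exp (-z))) := by
  set i₀ : Fin L := ⟨0, hL⟩
  have hterm : ∀ i, Tendsto (fun x : ℝ => x * ζ *
      (exp (-(lam i₀ * z + lam i₀ * (log x + log (ζ / ξ i₀))) / lam i) / ξ i))
      atTop (𝓝 (if i = i₀ then exp (-z) else 0)) := by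
    intro i
    split_ifs with hi
    · subst hi
      exact tendsto_mul_exp_neg_div_self (hpos i₀).ne' (div_pos hζ hξ1)
    · exact tendsto_mul_exp_neg_div_of_lt (hpos i) (hmax i hi) ζ (ξ i)
  have hsum := (tendsto_finsetSum Finset.univ fun i _ => hterm i).comp tendsto_natCast_atTop_atTop
  simpa only [Finset.sum_ite_eq', Finset.mem_univ, if_true, Function.comp_def, Finset.mul_sum]
    using hsum

/-- limit computation in the proof of Lemma 3: with `λ_1` the strictly
largest of the positive reals `λ_i`, `ζ > 0`, `ξ_1 > 0`, `ξ_i ≠ 0`, and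
`b_K = λ_1(log K + log(ζ/ξ_1))`, one has
`K·ζ·∑_i e^{-(λ_1 z + b_K)/λ_i}/ξ_i → e^{-z}` as `K → ∞`. -/
theorem stmt_13 (L : ℕ) (hL : 0 < L) (lam : Fin L → ℝ) (hpos : ∀ i, 0 < lam i)
    (hmax : ∀ i : Fin L, i ≠ ⟨0, hL⟩ → lam i < lam ⟨0, hL⟩)
    (ζ : ℝ) (hζ : 0 < ζ) (ξ : Fin L → ℝ) (hξ1 : 0 < ξ ⟨0, hL⟩) (hξ : ∀ i, ξ i ≠ 0)
    (z : ℝ) :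
    Tendsto (fun K : ℕ => (K : ℝ) * ζ *
        ∑ i, Real.exp (-(lam ⟨0, hL⟩ * z +
            lam ⟨0, hL⟩ * (Real.log K + Real.log (ζ / ξ ⟨0, hL⟩))) / lam i) / ξ i)
      atTop (nhds (Real.exp (-z))) :=
  stmt_13_general L hL lam hpos hmax ζ hζ ξ hξ1 z
end

section
/- Let L ≥ 1 be an integer, let λ_1 > λ_2 > … > λ_L > 0 be distinct positive reals, let ζ ∈ (0,1), and define ξ_i = ∏_{j ≠ i} (1 − λ_j/λ_i) and F(z) = 1 − ζ·Σ_{i=1}^L e^{−z/λ_i}/ξ_i for z ∈ ℝ. Then for every z ∈ ℝ, lim_{K→∞} F(λ_1 z + λ_1 log K + λ_1 log(ζ/ξ_1))^K = exp(−exp(−z)). -/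
/-!
Put `x = z + log (ζ / ξ₁)`, so that the argument of `F` is `λ₁ (x + log K)`. Then
`K (1 - F (λ₁ (x + log K))) = ζ ∑ᵢ K^{1 - λ₁/λᵢ} e^{-λ₁ x / λᵢ} / ξᵢ`: every term with
`λᵢ < λ₁` carries a negative power of `K` and vanishes, while the `i = 1` term is the constant
`ζ e^{-x} / ξ₁ = e^{-z}`. Hence `F(…)^K = (1 - e^{-z}/K + o(1/K))^K → exp (-e^{-z})`.
-/

open Filter Topology Real

theorem tendsto_natCast_mul_exp_neg_mul_add_log_div_of_lt {μ ℓ : ℝ} (hμ : 0 < μ) (hμℓ : μ < ℓ)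
    (x : ℝ) :
    Tendsto (fun K : ℕ => (K : ℝ) * exp (-(ℓ * (x + log K)) / μ)) atTop (𝓝 0) := by
  have hexponent : 1 - ℓ / μ < 0 := by rwa [sub_neg, one_lt_div hμ]
  have hlim : Tendsto (fun K : ℕ => exp (-(ℓ / μ) * x) * exp ((1 - ℓ / μ) * log K))
      atTop (𝓝 0) := by
    simpa using (tendsto_exp_atBot.comp <|
      (tendsto_log_atTop.comp tendsto_natCast_atTop_atTop).const_mul_atTop_of_neg hexponent
      ).const_mul (exp (-(ℓ / μ) * x))
  refine hlim.congr' ?_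
  filter_upwards [eventually_gt_atTop 0] with K hK
  calc exp (-(ℓ / μ) * x) * exp ((1 - ℓ / μ) * log K)
      = exp (log K) * exp (-(ℓ * (x + log K)) / μ) := by
        rw [← exp_add, ← exp_add]
        congr 1
        field_simp
        ring
    _ = K * exp (-(ℓ * (x + log K)) / μ) := by rw [exp_log (by exact_mod_cast hK)]

theorem natCast_mul_exp_neg_mul_add_log_div_self {ℓ : ℝ} (hℓ : ℓ ≠ 0) (x : ℝ) {K : ℕ}
    (hK : 0 < K) : (K : ℝ) * exp (-(ℓ * (x + log K)) / ℓ) = exp (-x) := by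
  have hK' : (0 : ℝ) < K := by exact_mod_cast hK
  rw [neg_div, mul_div_cancel_left₀ _ hℓ, neg_add, exp_add, exp_neg (log _), exp_log hK']
  field_simp

theorem tendsto_natCast_mul_sum_exp_neg_mul_add_log_div {ι : Type*} [Fintype ι]
    (lam c : ι → ℝ) (i₀ : ι) (hpos : ∀ i, 0 < lam i) (hmax : ∀ i ≠ i₀, lam i < lam i₀)
    (x : ℝ) :
    Tendsto (fun K : ℕ => (K : ℝ) * ∑ i, exp (-(lam i₀ * (x + log K)) / lam i) / c i)
      atTop (𝓝 (exp (-x) / c i₀)) := by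
  classical
  have hterm : ∀ i, Tendsto (fun K : ℕ => (K : ℝ) * exp (-(lam i₀ * (x + log K)) / lam i) / c i)
      atTop (𝓝 (if i = i₀ then exp (-x) / c i₀ else 0)) := by
    intro i
    split_ifs with hi
    · subst hi
      refine tendsto_const_nhds.congr' ?_
      filter_upwards [eventually_gt_atTop 0] with K hK
      rw [natCast_mul_exp_neg_mul_add_log_div_self (hpos i).ne' x hK]
    · simpa using (tendsto_natCast_mul_exp_neg_mul_add_log_div_of_lt (hpos i) (hmax i hi)
        x).div_const (c i)
  have hsum := tendsto_finsetSum Finset.univ fun i _ => hterm i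
  rw [Finset.sum_ite_eq' Finset.univ i₀, if_pos (Finset.mem_univ _)] at hsum
  simpa only [Finset.mul_sum, mul_div_assoc] using hsum

theorem stmt_14_general (L : ℕ) (hL : 0 < L) (lam : Fin L → ℝ) (hpos : ∀ i, 0 < lam i)
    (hanti : ∀ i j : Fin L, i < j → lam j < lam i)
    (ζ : ℝ) (hζ0 : 0 < ζ)
    (ξ : Fin L → ℝ)
    (hξdef : ∀ i, ξ i = ∏ j ∈ Finset.univ.erase i, (1 - lam j / lam i))
    (F : ℝ → ℝ)
    (hFdef : ∀ z, F z = 1 - ζ * ∑ i, Real.exp (-z / lam i) / ξ i)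
    (z : ℝ) :
    Tendsto (fun K : ℕ =>
        F (lam ⟨0, hL⟩ * z + lam ⟨0, hL⟩ * Real.log K +
            lam ⟨0, hL⟩ * Real.log (ζ / ξ ⟨0, hL⟩)) ^ K)
      atTop (nhds (Real.exp (-Real.exp (-z)))) := by
  set i₀ : Fin L := ⟨0, hL⟩
  have hmax : ∀ i ≠ i₀, lam i < lam i₀ := fun i hi =>
    hanti i₀ i (Fin.lt_def.2 (Nat.pos_of_ne_zero fun h => hi (Fin.ext h)))
  have hξ₀ : 0 < ξ i₀ := by
    rw [hξdef]
    exact Finset.prod_pos fun j hj =>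
      sub_pos.2 ((div_lt_one (hpos i₀)).2 (hmax j (Finset.ne_of_mem_erase hj)))
  set x := z + log (ζ / ξ i₀) with hx
  have hlimit : -ζ * (exp (-x) / ξ i₀) = -exp (-z) := by
    rw [neg_add, exp_add, exp_neg (log _), exp_log (div_pos hζ0 hξ₀)]
    field_simp
  have hKs : Tendsto (fun K : ℕ => (K : ℝ) *
      -(ζ * ∑ i, exp (-(lam i₀ * (x + log K)) / lam i) / ξ i)) atTop (𝓝 (-exp (-z))) := by
    rw [← hlimit]
    refine ((tendsto_natCast_mul_sum_exp_neg_mul_add_log_div lam ξ i₀ hpos hmax x).const_mul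
      (-ζ)).congr fun K => ?_
    ring
  refine (tendsto_one_add_pow_exp_of_tendsto hKs).congr fun K => ?_
  rw [hFdef, sub_eq_add_neg, show lam i₀ * z + lam i₀ * log K + lam i₀ * log (ζ / ξ i₀) =
    lam i₀ * (x + log K) by rw [hx]; ring]

/-- Gumbel-type convergence, Lemma 3 of the paper: for distinct positive
reals `λ_1 > … > λ_L > 0`, `ζ ∈ (0,1)`, `ξ_i = ∏_{j≠i}(1 - λ_j/λ_i)`, and
`F z = 1 - ζ ∑_i e^{-z/λ_i}/ξ_i`, one has for every `z`,
`F(λ_1 z + λ_1 log K + λ_1 log(ζ/ξ_1))^K → exp(-exp(-z))` as `K → ∞`. -/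
theorem stmt_14 (L : ℕ) (hL : 0 < L) (lam : Fin L → ℝ) (hpos : ∀ i, 0 < lam i)
    (hanti : ∀ i j : Fin L, i < j → lam j < lam i)
    (ζ : ℝ) (hζ0 : 0 < ζ) (hζ1 : ζ < 1)
    (ξ : Fin L → ℝ)
    (hξdef : ∀ i, ξ i = ∏ j ∈ Finset.univ.erase i, (1 - lam j / lam i))
    (F : ℝ → ℝ)
    (hFdef : ∀ z, F z = 1 - ζ * ∑ i, Real.exp (-z / lam i) / ξ i)
    (z : ℝ) :
    Tendsto (fun K : ℕ =>
        F (lam ⟨0, hL⟩ * z + lam ⟨0, hL⟩ * Real.log K +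
            lam ⟨0, hL⟩ * Real.log (ζ / ξ ⟨0, hL⟩)) ^ K)
      atTop (nhds (Real.exp (-Real.exp (-z)))) :=
  stmt_14_general L hL lam hpos hanti ζ hζ0 ξ hξdef F hFdef z
end

section
/- Let L ≥ 1 be an integer, let λ_1 > λ_2 > … > λ_L > 0 be distinct positive reals, let ζ ∈ (0,1), and define ξ_i = ∏_{j ≠ i} (1 − λ_j/λ_i) and F(z) = 1 − ζ·Σ_{i=1}^L e^{−z/λ_i}/ξ_i for z ∈ ℝ. Set u_K = λ_1 log K − λ_1 log log K + λ_1 log(ζ/ξ_1). Then there exist a constant C > 0 and an integer K_0 such that for all K ≥ K_0: 0 ≤ F(u_K) ≤ 1 and F(u_K)^K ≤ C/K. -/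
open Filter

/-- final bound of Lemma 3: with `F` as in Lemma 3 and
`u_K = λ_1 log K - λ_1 log log K + λ_1 log(ζ/ξ_1)`, there exist `C > 0` and `K₀` such
that for all `K ≥ K₀`: `0 ≤ F(u_K) ≤ 1` and `F(u_K)^K ≤ C/K`. -/
theorem stmt_15 (L : ℕ) (hL : 0 < L) (lam : Fin L → ℝ) (hpos : ∀ i, 0 < lam i)
    (hanti : ∀ i j : Fin L, i < j → lam j < lam i)
    (ζ : ℝ) (hζ0 : 0 < ζ) (hζ1 : ζ < 1)
    (ξ : Fin L → ℝ)
    (hξdef : ∀ i, ξ i = ∏ j ∈ Finset.univ.erase i, (1 - lam j / lam i))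
    (F : ℝ → ℝ)
    (hFdef : ∀ z, F z = 1 - ζ * ∑ i, Real.exp (-z / lam i) / ξ i)
    (u : ℕ → ℝ)
    (hudef : ∀ K, u K = lam ⟨0, hL⟩ * Real.log K - lam ⟨0, hL⟩ * Real.log (Real.log K) +
        lam ⟨0, hL⟩ * Real.log (ζ / ξ ⟨0, hL⟩)) :
    ∃ C > 0, ∃ K₀ : ℕ, ∀ K ≥ K₀,
      (0 ≤ F (u K) ∧ F (u K) ≤ 1) ∧ F (u K) ^ K ≤ C / K := by
  classical
  set i0 : Fin L := ⟨0, hL⟩ with hi0def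
  have hlam1 : 0 < lam i0 := hpos i0
  have hlam1ne : lam i0 ≠ 0 := ne_of_gt hlam1
  have hlt : ∀ j : Fin L, j ≠ i0 → lam j < lam i0 := by
    intro j hj
    refine hanti i0 j ?_
    have hj0 : j.1 ≠ 0 := fun h => hj (Fin.ext h)
    exact Nat.pos_of_ne_zero hj0
  have hξ1 : 0 < ξ i0 := by
    rw [hξdef]
    refine Finset.prod_pos ?_
    intro j hj
    have hj' : j ≠ i0 := Finset.ne_of_mem_erase hj
    have h1 : lam j / lam i0 < 1 := (div_lt_one hlam1).2 (hlt j hj')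
    linarith
  have hξ1ne : ξ i0 ≠ 0 := ne_of_gt hξ1
  have hζne : ζ ≠ 0 := ne_of_gt hζ0
  set c : ℝ := Real.log (ζ / ξ i0) with hc
  set g : ℕ → ℝ :=
    fun K => ζ * ∑ i ∈ Finset.univ.erase i0, (K : ℝ) * Real.exp (-u K / lam i) / ξ i with hgdef
  have hlogtend : Tendsto (fun K : ℕ => Real.log (K : ℝ)) atTop atTop :=
    (Real.tendsto_log_atTop.comp tendsto_natCast_atTop_atTop).congr fun _ => rfl
  -- the tail (indices other than i0) multiplied by K tends to 0
  have hgt : Tendsto g atTop (nhds 0) := by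
    have hsum : Tendsto
        (fun K : ℕ => ∑ i ∈ Finset.univ.erase i0, (K : ℝ) * Real.exp (-u K / lam i) / ξ i)
        atTop (nhds 0) := by
      have h : Tendsto
          (fun K : ℕ => ∑ i ∈ Finset.univ.erase i0, (K : ℝ) * Real.exp (-u K / lam i) / ξ i)
          atTop (nhds (∑ _i ∈ Finset.univ.erase i0, (0 : ℝ))) := by
        refine tendsto_finset_sum _ ?_
        intro i hi
        have hii0 : i ≠ i0 := Finset.ne_of_mem_erase hi
        have hlami : 0 < lam i := hpos i
        set a : ℝ := lam i0 / lam i with ha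
        have ha1 : 1 < a := (one_lt_div hlami).2 (hlt i hii0)
        have key : Tendsto (fun K : ℕ =>
            (1 - a) * Real.log (K : ℝ) + a * Real.log (Real.log (K : ℝ)) - a * c) atTop atBot := by
          have inner : Tendsto (fun t : ℝ => (1 - a) * t + a * Real.log t - a * c) atTop atBot := by
            have hdiv : Tendsto (fun t : ℝ => Real.log t / t) atTop (nhds 0) :=
              Real.isLittleO_log_id_atTop.tendsto_div_nhds_zero
            have hmul : Tendsto (fun t : ℝ => t * ((1 - a) + a * (Real.log t / t))) atTop atBot := by
              refine Tendsto.atTop_mul_neg (C := 1 - a) (by linarith) tendsto_id ?_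
              have : Tendsto (fun t : ℝ => (1 - a) + a * (Real.log t / t)) atTop
                  (nhds ((1 - a) + a * 0)) := tendsto_const_nhds.add (hdiv.const_mul a)
              rw [mul_zero, add_zero] at this
              exact this
            have h2 := tendsto_atBot_add_const_right atTop (-(a * c)) hmul
            refine h2.congr' ?_
            filter_upwards [eventually_gt_atTop (0 : ℝ)] with t ht
            have htne : t ≠ 0 := ne_of_gt ht
            field_simp
            ring
          exact (inner.comp hlogtend).congr fun K => rfl
        have hexp : Tendsto (fun K : ℕ => Real.exp
            ((1 - a) * Real.log (K : ℝ) + a * Real.log (Real.log (K : ℝ)) - a * c)) atTop (nhds 0) :=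
          Real.tendsto_exp_atBot.comp key
        have heq : ∀ᶠ K : ℕ in atTop,
            Real.exp ((1 - a) * Real.log (K : ℝ) + a * Real.log (Real.log (K : ℝ)) - a * c)
              = (K : ℝ) * Real.exp (-u K / lam i) := by
          filter_upwards [eventually_ge_atTop 1] with K hK
          have hKpos : (0 : ℝ) < (K : ℝ) := by exact_mod_cast hK
          have harg : (1 - a) * Real.log (K : ℝ) + a * Real.log (Real.log (K : ℝ)) - a * c
              = Real.log (K : ℝ) + (-u K / lam i) := by
            rw [hudef, ha]
            field_simp
            ring
          rw [harg, Real.exp_add, Real.exp_log hKpos]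
        have h3 := (hexp.congr' heq).div_const (ξ i)
        rw [zero_div] at h3
        exact h3
      rw [Finset.sum_const_zero] at h
      exact h
    have h4 := hsum.const_mul ζ
    rw [mul_zero] at h4
    exact h4
  -- gather eventual facts
  have hev1 : ∀ᶠ K : ℕ in atTop, |g K| ≤ 1 / 2 := by
    have h1 : ∀ᶠ K : ℕ in atTop, g K < 1 / 2 := hgt.eventually_lt_const (by norm_num)
    have h2 : ∀ᶠ K : ℕ in atTop, (-(1 / 2) : ℝ) < g K := hgt.eventually_const_lt (by norm_num)
    filter_upwards [h1, h2] with K hK1 hK2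
    rw [abs_le]; constructor <;> linarith
  obtain ⟨K₀, hK₀⟩ := (hev1.and (eventually_ge_atTop 3)).exists_forall_of_atTop
  refine ⟨Real.exp 1, Real.exp_pos 1, K₀, ?_⟩
  intro K hK
  obtain ⟨hgK, hK3⟩ := hK₀ K hK
  have hKpos : (0 : ℝ) < (K : ℝ) := by
    have : (3 : ℝ) ≤ (K : ℝ) := by exact_mod_cast hK3
    linarith
  have hKne : (K : ℝ) ≠ 0 := ne_of_gt hKpos
  have hlog1 : 1 ≤ Real.log (K : ℝ) := by
    rw [Real.le_log_iff_exp_le hKpos]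
    have h1 : Real.exp 1 < 2.7182818286 := Real.exp_one_lt_d9
    have h2 : (3 : ℝ) ≤ (K : ℝ) := by exact_mod_cast hK3
    linarith
  have hgabs := abs_le.1 hgK
  -- the term i0 of the sum
  have hterm0 : ζ * (Real.exp (-u K / lam i0) / ξ i0) = Real.log (K : ℝ) / (K : ℝ) := by
    have hlogpos : 0 < Real.log (K : ℝ) := lt_of_lt_of_le one_pos hlog1
    have harg : -u K / lam i0 = Real.log (Real.log (K : ℝ)) - Real.log (K : ℝ) - c := by
      rw [hudef]
      field_simp
      ring
    rw [harg, Real.exp_sub, Real.exp_sub, Real.exp_log hlogpos, Real.exp_log hKpos,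
      hc, Real.exp_log (div_pos hζ0 hξ1)]
    field_simp
  -- key identity : K * (1 - F (u K)) = log K + g K
  have hs : (K : ℝ) * (1 - F (u K)) = Real.log (K : ℝ) + g K := by
    rw [hFdef]
    rw [← Finset.add_sum_erase Finset.univ _ (Finset.mem_univ i0)]
    have : (K : ℝ) * (1 - (1 - ζ * (Real.exp (-u K / lam i0) / ξ i0 +
        ∑ i ∈ Finset.univ.erase i0, Real.exp (-u K / lam i) / ξ i)))
        = (K : ℝ) * (ζ * (Real.exp (-u K / lam i0) / ξ i0)) +
          ζ * ((K : ℝ) * ∑ i ∈ Finset.univ.erase i0, Real.exp (-u K / lam i) / ξ i) := by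
      ring
    have htail : ζ * ((K : ℝ) * ∑ i ∈ Finset.univ.erase i0, Real.exp (-u K / lam i) / ξ i)
        = g K := by
      simp only [hgdef]
      congr 1
      rw [Finset.mul_sum]
      exact Finset.sum_congr rfl fun i _ => by ring
    rw [this, hterm0, htail]
    have hcl : (K : ℝ) * (Real.log (K : ℝ) / (K : ℝ)) = Real.log (K : ℝ) := by
      field_simp
    rw [hcl]
  have hFle1 : F (u K) ≤ 1 := by
    have h1 : 0 ≤ (K : ℝ) * (1 - F (u K)) := by rw [hs]; linarith
    nlinarith
  have hF0 : 0 ≤ F (u K) := by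
    have hlogle : Real.log (K : ℝ) ≤ (K : ℝ) - 1 := Real.log_le_sub_one_of_pos hKpos
    have h1 : (K : ℝ) * (1 - F (u K)) ≤ (K : ℝ) * 1 := by rw [hs]; linarith
    have h2 := le_of_mul_le_mul_left h1 hKpos
    linarith
  refine ⟨⟨hF0, hFle1⟩, ?_⟩
  -- the power bound
  have hbase : F (u K) ≤ Real.exp (-(1 - F (u K))) := by
    have := Real.add_one_le_exp (-(1 - F (u K)))
    linarith
  have hpow : F (u K) ^ K ≤ Real.exp (-(1 - F (u K))) ^ K :=
    pow_le_pow_left₀ hF0 hbase K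
  have hexp_pow : Real.exp (-(1 - F (u K))) ^ K = Real.exp ((K : ℝ) * (-(1 - F (u K)))) :=
    (Real.exp_nat_mul _ K).symm
  have hval : (K : ℝ) * (-(1 - F (u K))) = -(Real.log (K : ℝ) + g K) := by
    rw [mul_neg, hs]
  have hfinal : Real.exp ((K : ℝ) * (-(1 - F (u K)))) ≤ Real.exp 1 / (K : ℝ) := by
    rw [hval, neg_add, Real.exp_add, Real.exp_neg, Real.exp_log hKpos]
    rw [div_eq_mul_inv]
    have h1 : Real.exp (-g K) ≤ Real.exp 1 := by
      rw [Real.exp_le_exp]; linarith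
    have h2 : (0 : ℝ) ≤ ((K : ℝ))⁻¹ := inv_nonneg.2 (le_of_lt hKpos)
    calc ((K : ℝ))⁻¹ * Real.exp (-g K) = Real.exp (-g K) * ((K : ℝ))⁻¹ := by ring
      _ ≤ Real.exp 1 * ((K : ℝ))⁻¹ := mul_le_mul_of_nonneg_right h1 h2
  calc F (u K) ^ K ≤ Real.exp (-(1 - F (u K))) ^ K := hpow
    _ = Real.exp ((K : ℝ) * (-(1 - F (u K)))) := hexp_pow
    _ ≤ Real.exp 1 / (K : ℝ) := hfinal
end
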